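/- If s ≡_ε t (s and t are related by some ε-APB) with ε ∈ (0,1), then s ∼^2_ε t, i.e., s and t are up-to-(2,ε)-bisimilar. -/

import Mathlib

open scoped BigOperators

attribute [local instance] Classical.propDecidable

/-- Mass that a (sub)distribution `μ` assigns to a set `A`. -/
noncomputable def pmass {S : Type*} (μ : S → ℝ) (A : Set S) : ℝ := ∑' a : A, μ a

/-- L1-distance between two functions `S → ℝ`. -/
noncomputable def l1dist {S : Type*} (μ ν : S → ℝ) : ℝ := ∑' s, |μ s - ν s|

/-- `μ : S → ℝ` is a probability distribution. -/
def IsDistr {S : Type*} (μ : S → ℝ) : Prop :=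
  (∀ s, 0 ≤ μ s) ∧ (∀ s, μ s ≤ 1) ∧ HasSum μ 1

/-- Image of a set under a relation. -/
def relImg {S : Type*} (R : S → S → Prop) (A : Set S) : Set S := {t | ∃ s ∈ A, R s t}

/-- ε-bisimulation on a labeled Markov chain with transition function `P` and labeling `lab`. -/
def IsEpsBisim {S L : Type*} (P : S → S → ℝ) (lab : S → L) (ε : ℝ)
    (R : S → S → Prop) : Prop :=
  Reflexive R ∧ Symmetric R ∧
    ∀ s t, R s t → lab s = lab t ∧
      ∀ A : Set S, pmass (P s) A ≤ pmass (P t) (relImg R A) + ε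

/-- ε-APB (approximate probabilistic bisimulation with precision ε). -/
def IsEpsAPB {S L : Type*} (P : S → S → ℝ) (lab : S → L) (ε : ℝ)
    (R : S → S → Prop) : Prop :=
  Reflexive R ∧ Symmetric R ∧
    ∀ s t, R s t → lab s = lab t ∧
      ∀ A : Set S, relImg R A ⊆ A → |pmass (P s) A - pmass (P t) A| ≤ ε

/-- Weight of a finite path witnessing `B U A` starting at `s` and continuing along the list. -/
noncomputable def untilWeight {S : Type*} (P : S → S → ℝ) (B A : Set S) :
    S → List S → ℝ
  | s, [] => if s ∈ A then 1 else 0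
  | s, t :: rest =>
      if s ∈ A then 0 else if s ∈ B then P s t * untilWeight P B A t rest else 0

/-- `Pr_s(B U A)`: probability of reaching `A` from `s` via states in `B`. -/
noncomputable def untilProb {S : Type*} (P : S → S → ℝ) (B A : Set S) (s : S) : ℝ :=
  ∑' l : List S, untilWeight P B A s l

/-- `Pr_s(□C)`: probability of staying in `C` forever, `= 1 - Pr_s(C U Cᶜ)`. -/
noncomputable def boxProb {S : Type*} (P : S → S → ℝ) (C : Set S) (s : S) : ℝ :=
  1 - untilProb P C Cᶜ s

/-- Weak ε-bisimulation. -/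
def IsWeakEpsBisim {S L : Type*} (P : S → S → ℝ) (lab : S → L) (ε : ℝ)
    (R : S → S → Prop) : Prop :=
  Reflexive R ∧ Symmetric R ∧
    ∀ s t, R s t → lab s = lab t ∧
      ∀ A : Set S, untilProb P {u | lab u = lab s} A s ≤
        untilProb P {u | lab u = lab t} (relImg R A) t + ε

/-- Weak ε-bisimilarity of two states. -/
def WeakEpsBisimilar {S L : Type*} (P : S → S → ℝ) (lab : S → L) (ε : ℝ)
    (s t : S) : Prop :=
  ∃ R, IsWeakEpsBisim P lab ε R ∧ R s t

/-- Up-to-(n,ε)-bisimilarity. -/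
def upTo {S L : Type*} (P : S → S → ℝ) (lab : S → L) (ε : ℝ) :
    ℕ → S → S → Prop
  | 0, _, _ => True
  | n + 1, s, t => lab s = lab t ∧
      ∀ A : Set S,
        pmass (P s) A ≤ pmass (P t) (relImg (upTo P lab ε n) A) + ε ∧
        pmass (P t) A ≤ pmass (P s) (relImg (upTo P lab ε n) A) + ε

/-- Branching ε-bisimulation. -/
def IsBranchingEpsBisim {S L : Type*} (P : S → S → ℝ) (lab : S → L) (ε : ℝ)
    (R : S → S → Prop) : Prop :=
  Equivalence R ∧
    ∀ s t, R s t → lab s = lab t ∧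
      ∀ A : Set S, relImg R A ⊆ A →
        |untilProb P {u | R s u} A s - untilProb P {u | R t u} A t| ≤ ε

/-- Transitive ε-bisimulation (equivalently, an ε-APB which is an equivalence). -/
def IsTransEpsBisim {S L : Type*} (P : S → S → ℝ) (lab : S → L) (ε : ℝ)
    (R : S → S → Prop) : Prop :=
  Equivalence R ∧
    ∀ s t, R s t → lab s = lab t ∧
      ∀ A : Set S, relImg R A ⊆ A → |pmass (P s) A - pmass (P t) A| ≤ ε

/-- Exact probabilistic bisimulation. -/
def IsExactBisim {S L : Type*} (P : S → S → ℝ) (lab : S → L)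
    (R : S → S → Prop) : Prop :=
  Equivalence R ∧
    ∀ s t, R s t → lab s = lab t ∧
      ∀ c, pmass (P s) {u | R c u} = pmass (P t) {u | R c u}

/-- `Pr_s(◇^{≤k} G)`: probability of reaching `G` from `s` within `k` steps. -/
noncomputable def reachLe {S : Type*} (P : S → S → ℝ) (G : Set S) :
    ℕ → S → ℝ
  | 0, s => if s ∈ G then 1 else 0
  | k + 1, s => if s ∈ G then 1 else ∑' t, P s t * reachLe P G k t

/-!
An ε-APB `R` only compares masses of `R`-closed sets. Given `A`, its closure under the
reflexive-transitive closure of `R` is `R`-closed and contains `A`, and since `R` preserves labels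
every state of this closure shares a label with a state of `A`. Any two states with equal labels
are up-to-(1,ε)-bisimilar, because `∼^0_ε` relates everything, so the image of `A` under `∼^1_ε`
contains the closure; monotonicity of the mass then gives the bound required by `∼^2_ε`.
-/

open Relation

section LMC

variable {S L : Type*}

section pmass

variable {μ : S → ℝ}

lemma pmass_empty (μ : S → ℝ) : pmass μ ∅ = 0 := by
  simp [pmass]

lemma pmass_mono (h0 : ∀ s, 0 ≤ μ s) (hμ : Summable μ) {A B : Set S} (hAB : A ⊆ B) :
    pmass μ A ≤ pmass μ B := by
  unfold pmass
  rw [tsum_subtype, tsum_subtype]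
  exact (hμ.indicator A).tsum_le_tsum (Set.indicator_le_indicator_of_subset hAB h0)
    (hμ.indicator B)

lemma IsDistr.pmass_univ (hμ : IsDistr μ) : pmass μ Set.univ = 1 :=
  (tsum_univ μ).trans hμ.2.2.tsum_eq

lemma IsDistr.pmass_le_one (hμ : IsDistr μ) (A : Set S) : pmass μ A ≤ 1 :=
  (Summable.tsum_subtype_le μ A hμ.1 hμ.2.2.summable).trans_eq hμ.2.2.tsum_eq

end pmass

lemma relImg_mono {R Q : S → S → Prop} (hRQ : ∀ u v, R u v → Q u v) (A : Set S) :
    relImg R A ⊆ relImg Q A :=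
  fun _ ⟨a, ha, hR⟩ => ⟨a, ha, hRQ _ _ hR⟩

lemma subset_relImg_reflTransGen (R : S → S → Prop) (A : Set S) :
    A ⊆ relImg (ReflTransGen R) A :=
  fun a ha => ⟨a, ha, .refl⟩

lemma relImg_relImg_reflTransGen_subset (R : S → S → Prop) (A : Set S) :
    relImg R (relImg (ReflTransGen R) A) ⊆ relImg (ReflTransGen R) A := by
  rintro x ⟨y, ⟨a, ha, hay⟩, hyx⟩
  exact ⟨a, ha, hay.tail hyx⟩

lemma upTo_one_of_lab_eq {P : S → S → ℝ} {lab : S → L} (hP : ∀ s, IsDistr (P s)) {ε : ℝ}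
    (hε : 0 ≤ ε) {u v : S} (huv : lab u = lab v) : upTo P lab ε 1 u v := by
  refine ⟨huv, fun A => ?_⟩
  rcases A.eq_empty_or_nonempty with rfl | ⟨a, ha⟩
  · have hempty : relImg (upTo P lab ε 0) ∅ = ∅ := by simp [relImg]
    simp only [hempty, pmass_empty]
    constructor <;> linarith
  · have huniv : relImg (upTo P lab ε 0) A = Set.univ :=
      Set.eq_univ_of_forall fun _ => ⟨a, ha, trivial⟩
    rw [huniv, (hP u).pmass_univ, (hP v).pmass_univ]
    exact ⟨by linarith [(hP u).pmass_le_one A], by linarith [(hP v).pmass_le_one A]⟩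

namespace IsEpsAPB

variable {P : S → S → ℝ} {lab : S → L} {ε : ℝ} {R : S → S → Prop}

lemma lab_eq_of_reflTransGen (hR : IsEpsAPB P lab ε R) {u v : S} (huv : ReflTransGen R u v) :
    lab u = lab v := by
  induction huv with
  | refl => rfl
  | tail _ hR' ih => exact ih.trans (hR.2.2 _ _ hR').1

lemma pmass_le_pmass_relImg_add (hR : IsEpsAPB P lab ε R) (hP : ∀ s, IsDistr (P s))
    {Q : S → S → Prop} (hRQ : ∀ u v, ReflTransGen R u v → Q u v) {u v : S} (huv : R u v)
    (A : Set S) : pmass (P u) A ≤ pmass (P v) (relImg Q A) + ε := by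
  set C := relImg (ReflTransGen R) A
  have hC : |pmass (P u) C - pmass (P v) C| ≤ ε :=
    (hR.2.2 u v huv).2 C (relImg_relImg_reflTransGen_subset R A)
  calc pmass (P u) A ≤ pmass (P u) C :=
        pmass_mono (hP u).1 (hP u).2.2.summable (subset_relImg_reflTransGen R A)
    _ ≤ pmass (P v) C + ε := by linarith [(abs_le.mp hC).2]
    _ ≤ pmass (P v) (relImg Q A) + ε := by
        gcongr
        exact pmass_mono (hP v).1 (hP v).2.2.summable (relImg_mono hRQ A)

end IsEpsAPB

end LMC

theorem epsAPB_implies_upTo_two_general {S L : Type*}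
    (P : S → S → ℝ) (lab : S → L)
    (hP : ∀ s, IsDistr (P s))
    (ε : ℝ) (hε0 : 0 < ε)
    (s t : S) (hst : ∃ R, IsEpsAPB P lab ε R ∧ R s t) :
    upTo P lab ε 2 s t := by
  obtain ⟨R, hR, hRst⟩ := hst
  have hRQ : ∀ u v, ReflTransGen R u v → upTo P lab ε 1 u v := fun _ _ huv =>
    upTo_one_of_lab_eq hP hε0.le (hR.lab_eq_of_reflTransGen huv)
  exact ⟨(hR.2.2 s t hRst).1, fun A => ⟨hR.pmass_le_pmass_relImg_add hP hRQ hRst A,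
    hR.pmass_le_pmass_relImg_add hP hRQ (hR.2.1 hRst) A⟩⟩

theorem epsAPB_implies_upTo_two {S L : Type*} [Countable S] [Nonempty S]
    (P : S → S → ℝ) (lab : S → L)
    (hP : ∀ s, IsDistr (P s)) (hfb : ∀ s, (Function.support (P s)).Finite)
    (ε : ℝ) (hε0 : 0 < ε) (hε1 : ε < 1)
    (s t : S) (hst : ∃ R, IsEpsAPB P lab ε R ∧ R s t) :
    upTo P lab ε 2 s t :=
  epsAPB_implies_upTo_two_general P lab hP ε hε0 s t hst
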